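/- Suppose R s a ≥ 0 for all s, a; for each state s there exists an action a with c s a ≤ b; and there exists a state s₀ such that max_{a ∈ A} R s₀ a > max_{a : c s₀ a ≤ b} R s₀ a and max_{a : c s₀ a ≤ b} R s₀ a > 0. Let π* be a policy maximizing J(R, ·) over all policies, and let π_c be a feasible policy maximizing J(R, ·) over all feasible policies. Then J(R_c, π*) < J(R_c, π_c), where R_c s a = R s a if c s a ≤ b and R_c s a = 0 otherwise. -/

import Mathlib

/-!
An optimal unconstrained policy is greedy: were it not, moving its mass at some state onto a
maximizing action would increase its value. So at `s₀` it only plays actions of reward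
`max R s₀`, which exceeds every feasible reward there; these actions are infeasible and earn no
constrained reward. In every other state its constrained reward is at most the best feasible
reward. The deterministic policy playing a best feasible action everywhere is feasible and earns
exactly the sum of the best feasible rewards, so the constrained optimum earns at least that.
-/

open Finset
open scoped Classical

/-- A (stochastic) policy on states `S` and actions `A`: nonnegative and sums to 1 in each state. -/
def IsPolicy {S A : Type*} [Fintype A] (π : S → A → ℝ) : Prop :=
  (∀ s a, 0 ≤ π s a) ∧ ∀ s, ∑ a, π s a = 1

/-- The value of a policy `π` under reward function `R`. -/
noncomputable def J {S A : Type*} [Fintype S] [Fintype A]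
    (R : S → A → ℝ) (π : S → A → ℝ) : ℝ :=
  ∑ s, ∑ a, π s a * R s a

/-- A policy is feasible if it only puts positive probability on actions with cost at most `b`. -/
def Feasible {S A : Type*} (c : S → A → ℝ) (b : ℝ) (π : S → A → ℝ) : Prop :=
  ∀ s a, 0 < π s a → c s a ≤ b

section

variable {S A : Type*}

theorem feasible_single {c : S → A → ℝ} {b : ℝ} {f : S → A}
    (hf : ∀ s, c s (f s) ≤ b) :
    Feasible c b fun s => Pi.single (f s) (1 : ℝ) := by
  intro s a ha
  rcases eq_or_ne a (f s) with rfl | hne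
  · exact hf s
  · simp [hne] at ha

variable [Fintype A]

theorem sum_mul_le_of_le {p r : A → ℝ} {M : ℝ} (hp : ∀ a, 0 ≤ p a) (hp1 : ∑ a, p a = 1)
    (hr : ∀ a, r a ≤ M) : ∑ a, p a * r a ≤ M :=
  calc ∑ a, p a * r a ≤ ∑ a, p a * M :=
        sum_le_sum fun a _ => mul_le_mul_of_nonneg_left (hr a) (hp a)
    _ = M := by rw [← sum_mul, hp1, one_mul]

theorem eq_of_sum_mul_eq {p r : A → ℝ} {M : ℝ} (hp : ∀ a, 0 ≤ p a) (hp1 : ∑ a, p a = 1)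
    (hr : ∀ a, r a ≤ M) (hsum : ∑ a, p a * r a = M) {a : A} (ha : 0 < p a) : r a = M := by
  by_contra hne
  have hlt : ∑ a, p a * r a < ∑ a, p a * M :=
    sum_lt_sum (fun i _ => mul_le_mul_of_nonneg_left (hr i) (hp i))
      ⟨a, mem_univ a, mul_lt_mul_of_pos_left (lt_of_le_of_ne (hr a) hne) ha⟩
  rw [← sum_mul, hp1, one_mul] at hlt
  exact hsum.not_lt hlt

theorem IsPolicy.update_single {π : S → A → ℝ} (hπ : IsPolicy π) (s : S) (a : A) :
    IsPolicy (Function.update π s (Pi.single a 1)) := by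
  refine ⟨fun s' a' => ?_, fun s' => ?_⟩ <;> by_cases h : s' = s
  · subst h; simp only [Function.update_self, Pi.single_apply]; split <;> norm_num
  · simpa [h] using hπ.1 s' a'
  · simp [h]
  · simpa [h] using hπ.2 s'

theorem isPolicy_single (f : S → A) : IsPolicy fun s => Pi.single (f s) (1 : ℝ) := by
  refine ⟨fun s a => ?_, fun s => by simp⟩
  simp only [Pi.single_apply]
  split <;> norm_num

theorem J_single [Fintype S] (R : S → A → ℝ) (f : S → A) :
    J R (fun s => Pi.single (f s) (1 : ℝ)) = ∑ s, R s (f s) := by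
  simp [J, Pi.single_apply]

theorem J_update [Fintype S] (R π : S → A → ℝ) (s : S) (p : A → ℝ) :
    J R (Function.update π s p) = J R π + (∑ a, p a * R s a - ∑ a, π s a * R s a) := by
  rw [← sub_eq_iff_eq_add', J, J, ← sum_sub_distrib,
    sum_eq_single s (fun s' _ hs' => by simp [hs']) (by simp)]
  simp

variable [Nonempty A]

theorem IsPolicy.sum_mul_le_sup' {π : S → A → ℝ} (hπ : IsPolicy π) (R : S → A → ℝ)
    (s : S) :
    ∑ a, π s a * R s a ≤ univ.sup' univ_nonempty (R s) :=
  sum_mul_le_of_le (hπ.1 s) (hπ.2 s) fun a => le_sup' (R s) (mem_univ a)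

theorem sum_mul_eq_sup'_of_optimal [Fintype S] {R π : S → A → ℝ} (hπ : IsPolicy π)
    (hopt : ∀ π', IsPolicy π' → J R π' ≤ J R π) (s : S) :
    ∑ a, π s a * R s a = univ.sup' univ_nonempty (R s) := by
  obtain ⟨a, -, ha⟩ := exists_mem_eq_sup' univ_nonempty (R s)
  have hle := hopt _ (hπ.update_single s a)
  rw [J_update] at hle
  simp only [Pi.single_apply, ite_mul, one_mul, zero_mul, sum_ite_eq', mem_univ, if_true] at hle
  exact le_antisymm (hπ.sum_mul_le_sup' R s) (by linarith)

theorem eq_sup'_of_optimal_of_pos [Fintype S] {R π : S → A → ℝ} (hπ : IsPolicy π)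
    (hopt : ∀ π', IsPolicy π' → J R π' ≤ J R π) {s : S} {a : A} (ha : 0 < π s a) :
    R s a = univ.sup' univ_nonempty (R s) :=
  eq_of_sum_mul_eq (hπ.1 s) (hπ.2 s) (fun a => le_sup' (R s) (mem_univ a))
    (sum_mul_eq_sup'_of_optimal hπ hopt s) ha

end

section

variable {S A : Type*} [Fintype A] (R c : S → A → ℝ) (b : ℝ)

noncomputable def constrainedReward : S → A → ℝ := fun s a => if c s a ≤ b then R s a else 0

theorem J_constrainedReward_of_feasible [Fintype S] {π : S → A → ℝ} (hπ : IsPolicy π)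
    (hfeas : Feasible c b π) : J (constrainedReward R c b) π = J R π := by
  refine sum_congr rfl fun s _ => sum_congr rfl fun a _ => ?_
  rcases (hπ.1 s a).lt_or_eq with h | h
  · simp [constrainedReward, hfeas s a h]
  · simp [← h]

theorem feasibleActions_nonempty {c : S → A → ℝ} {b : ℝ} (hfeas : ∀ s, ∃ a, c s a ≤ b)
    (s : S) :
    (univ.filter fun a => c s a ≤ b).Nonempty := by
  obtain ⟨a, ha⟩ := hfeas s
  exact ⟨a, by simpa using ha⟩

noncomputable def feasibleMax (hfeas : ∀ s, ∃ a, c s a ≤ b) (s : S) : ℝ :=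
  (univ.filter fun a => c s a ≤ b).sup' (feasibleActions_nonempty hfeas s) (R s)

variable {R c b} (hfeas : ∀ s, ∃ a, c s a ≤ b)

theorem le_feasibleMax {s : S} {a : A} (ha : c s a ≤ b) : R s a ≤ feasibleMax R c b hfeas s :=
  le_sup' (R s) (mem_filter.mpr ⟨mem_univ a, ha⟩)

theorem constrainedReward_le_feasibleMax (hR : ∀ s a, 0 ≤ R s a) (s : S) (a : A) :
    constrainedReward R c b s a ≤ feasibleMax R c b hfeas s := by
  obtain ⟨a₀, ha₀⟩ := hfeas s
  unfold constrainedReward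
  split_ifs with ha
  · exact le_feasibleMax hfeas ha
  · exact (hR s a₀).trans (le_feasibleMax hfeas ha₀)

theorem sum_feasibleMax_le_of_optimal [Fintype S] {πc : S → A → ℝ}
    (hopt : ∀ π, IsPolicy π → Feasible c b π → J R π ≤ J R πc) :
    ∑ s, feasibleMax R c b hfeas s ≤ J R πc := by
  choose f hf hfR using fun s => exists_mem_eq_sup' (feasibleActions_nonempty hfeas s) (R s)
  have hfc : ∀ s, c s (f s) ≤ b := fun s => (mem_filter.mp (hf s)).2
  calc ∑ s, feasibleMax R c b hfeas s = J R fun s => Pi.single (f s) (1 : ℝ) :=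
        (sum_congr rfl fun s _ => hfR s).trans (J_single R f).symm
    _ ≤ J R πc := hopt _ (isPolicy_single f) (feasible_single hfc)

theorem J_constrainedReward_lt_sum_feasibleMax [Fintype S] (hR : ∀ s a, 0 ≤ R s a)
    {π : S → A → ℝ} (hπ : IsPolicy π) {s₀ : S}
    (hzero : ∑ a, π s₀ a * constrainedReward R c b s₀ a = 0)
    (hpos : 0 < feasibleMax R c b hfeas s₀) :
    J (constrainedReward R c b) π < ∑ s, feasibleMax R c b hfeas s :=
  sum_lt_sum
    (fun s _ => sum_mul_le_of_le (hπ.1 s) (hπ.2 s) (constrainedReward_le_feasibleMax hfeas hR s))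
    ⟨s₀, mem_univ s₀, hzero ▸ hpos⟩

theorem sum_mul_constrainedReward_eq_zero_of_optimal [Fintype S] [Nonempty A] {π : S → A → ℝ}
    (hπ : IsPolicy π) (hopt : ∀ π', IsPolicy π' → J R π' ≤ J R π) {s₀ : S}
    (hgap : feasibleMax R c b hfeas s₀ < univ.sup' univ_nonempty (R s₀)) :
    ∑ a, π s₀ a * constrainedReward R c b s₀ a = 0 := by
  refine sum_eq_zero fun a _ => ?_
  rcases (hπ.1 s₀ a).lt_or_eq with ha | ha
  · have hinfeas : ¬ c s₀ a ≤ b := fun hc =>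
      not_lt_of_ge (le_feasibleMax hfeas hc) (eq_sup'_of_optimal_of_pos hπ hopt ha ▸ hgap)
    simp [constrainedReward, hinfeas]
  · simp [← ha]

end

/-- under nonnegative rewards, feasibility of every state, and a state
`s₀` where the unconstrained max strictly exceeds the (positive) constrained max, the
unconstrained optimum `π*` is strictly worse than the constrained optimum `π_c`
under the constrained reward `R_c`. -/
theorem unconstrained_optimum_strictly_worse_constrained_reward
    {S A : Type*} [Fintype S] [Fintype A] [Nonempty A]
    (R c : S → A → ℝ) (b : ℝ)
    (hR : ∀ s a, 0 ≤ R s a)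
    (hfeas : ∀ s, ∃ a, c s a ≤ b)
    (s₀ : S)
    (hgap : (Finset.univ.filter (fun a => c s₀ a ≤ b)).sup'
        (by obtain ⟨a, ha⟩ := hfeas s₀
            exact ⟨a, by simpa using ha⟩) (R s₀)
      < Finset.univ.sup' Finset.univ_nonempty (R s₀))
    (hpos : 0 < (Finset.univ.filter (fun a => c s₀ a ≤ b)).sup'
        (by obtain ⟨a, ha⟩ := hfeas s₀
            exact ⟨a, by simpa using ha⟩) (R s₀))
    (πstar : S → A → ℝ)
    (hπstar : IsPolicy πstar)
    (hoptstar : ∀ π : S → A → ℝ, IsPolicy π → J R π ≤ J R πstar)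
    (πc : S → A → ℝ)
    (hπc : IsPolicy πc) (hπcFeas : Feasible c b πc)
    (hoptc : ∀ π : S → A → ℝ, IsPolicy π → Feasible c b π → J R π ≤ J R πc) :
    J (fun s a => if c s a ≤ b then R s a else 0) πstar <
      J (fun s a => if c s a ≤ b then R s a else 0) πc :=
  calc J (constrainedReward R c b) πstar < ∑ s, feasibleMax R c b hfeas s :=
        J_constrainedReward_lt_sum_feasibleMax hfeas hR hπstar
          (sum_mul_constrainedReward_eq_zero_of_optimal hfeas hπstar hoptstar hgap) hpos
    _ ≤ J R πc := sum_feasibleMax_le_of_optimal hfeas hoptc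
    _ = J (constrainedReward R c b) πc :=
        (J_constrainedReward_of_feasible R c b hπc hπcFeas).symm
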